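/- arXiv:2001.01058 — 3 statements merged into one kernel-verified Lean document; each statement's English description precedes it below -/
import Mathlib

section
/- Let R be a finite unitary ring and I an ideal of R with I ⊆ J(R). If all Sylow p-subgroups of the unit group R* are cyclic, then all Sylow p-subgroups of the unit group (R/I)* are cyclic. -/
/-!
Since `I ⊆ J(R)`, an element of `R` whose image in `R/I` is a unit is itself a unit, so
`Rˣ → (R/I)ˣ` is a surjection of finite groups. Every Sylow `p`-subgroup of `(R/I)ˣ` is then
the image of a Sylow `p`-subgroup of `Rˣ`, and homomorphic images of cyclic groups are cyclic.
-/

theorem IsUnit.of_isUnit_mul_of_isUnit_mul {M : Type*} [Monoid M] {a b : M}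
    (hab : IsUnit (a * b)) (hba : IsUnit (b * a)) : IsUnit a := by
  obtain ⟨u, hu⟩ := hab
  obtain ⟨v, hv⟩ := hba
  have left_inv : (↑v⁻¹ * b) * a = 1 := by rw [mul_assoc, ← hv, Units.inv_mul]
  have right_inv : a * (b * ↑u⁻¹) = 1 := by rw [← mul_assoc, ← hu, Units.mul_inv]
  exact isUnit_iff_exists.2
    ⟨_, right_inv, left_inv_eq_right_inv left_inv right_inv ▸ left_inv⟩

section Jacobson

variable {R S : Type*} [Ring R] [Ring S]

/- A left inverse `t` of `x` again satisfies `t - 1 ∈ J(R)`, so `t` has a left inverse as well,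
which can only be `x`. -/
theorem Ring.isUnit_of_sub_one_mem_jacobson {x : R} (hx : x - 1 ∈ Ring.jacobson R) :
    IsUnit x := by
  rw [← Ideal.jacobson_bot] at hx
  obtain ⟨t, ht⟩ := Ideal.exists_mul_sub_mem_of_sub_one_mem_jacobson x hx
  rw [Ideal.mem_bot, sub_eq_zero] at ht
  have ht_sub_one : t - 1 ∈ Ideal.jacobson ⊥ := by
    rw [show t - 1 = -(t * (x - 1)) by rw [mul_sub, ht, mul_one, neg_sub]]
    exact neg_mem (Ideal.mul_mem_left _ t hx)
  obtain ⟨u, hu⟩ := Ideal.exists_mul_sub_mem_of_sub_one_mem_jacobson t ht_sub_one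
  rw [Ideal.mem_bot, sub_eq_zero] at hu
  have hux : u = x := by
    calc u = u * (t * x) := by rw [ht, mul_one]
      _ = x := by rw [← mul_assoc, hu, one_mul]
  exact isUnit_iff_exists.2 ⟨t, hux ▸ hu, ht⟩

theorem RingHom.isLocalHom_of_surjective_of_ker_le_jacobson {f : R →+* S}
    (hf : Function.Surjective f) (hker : RingHom.ker f ≤ Ring.jacobson R) : IsLocalHom f := by
  refine ⟨fun r hr => ?_⟩
  obtain ⟨s, hs⟩ := hf ↑hr.unit⁻¹
  have mul_sub_one_mem {a b : R} (hab : f a * f b = 1) : a * b - 1 ∈ Ring.jacobson R :=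
    hker (by rw [RingHom.mem_ker, map_sub, map_mul, hab, map_one, sub_self])
  exact .of_isUnit_mul_of_isUnit_mul
    (Ring.isUnit_of_sub_one_mem_jacobson (mul_sub_one_mem (by rw [hs, IsUnit.mul_val_inv])))
    (Ring.isUnit_of_sub_one_mem_jacobson (mul_sub_one_mem (by rw [hs, IsUnit.val_inv_mul])))

end Jacobson

theorem Sylow.isCyclic_of_surjective {G G' : Type*} [Group G] [Group G'] [Finite G]
    {f : G →* G'} (hf : Function.Surjective f) {p : ℕ} [Fact p.Prime]
    (h : ∀ P : Sylow p G, IsCyclic P) (Q : Sylow p G') : IsCyclic Q := by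
  obtain ⟨P, rfl⟩ := Sylow.mapSurjective_surjective hf p Q
  have := h P
  exact _root_.isCyclic_of_surjective _ (f.subgroupMap_surjective P)

theorem sylow_cyclic_of_quotient_by_le_jacobson_general {R : Type*} [Ring R] [Fintype R]
    (p : ℕ) [Fact p.Prime] (I : TwoSidedIdeal R)
    (hI : ∀ x ∈ I, x ∈ Ideal.jacobson (⊥ : Ideal R))
    (hSyl : ∀ P : Sylow p Rˣ, IsCyclic P) :
    ∀ Q : Sylow p (I.ringCon.Quotient)ˣ, IsCyclic Q := by
  have hker : RingHom.ker I.ringCon.mk' ≤ Ring.jacobson R := fun x hx => by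
    rw [← Ideal.jacobson_bot]
    exact hI x (by rwa [← I.ker_ringCon_mk', TwoSidedIdeal.mem_ker])
  have hlocal :=
    RingHom.isLocalHom_of_surjective_of_ker_le_jacobson I.ringCon.mk'_surjective hker
  exact Sylow.isCyclic_of_surjective
    (IsLocalRing.surjective_units_map_of_local_ringHom _ I.ringCon.mk'_surjective hlocal) hSyl

/-- For a finite unitary ring `R` and a (two-sided) ideal `I ⊆ J(R)`, if all Sylow
`p`-subgroups of `Rˣ` are cyclic, then all Sylow `p`-subgroups of `(R/I)ˣ` are cyclic. -/
theorem sylow_cyclic_of_quotient_by_le_jacobson {R : Type*} [Ring R] [Fintype R] [Nontrivial R]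
    (p : ℕ) [Fact p.Prime] (I : TwoSidedIdeal R)
    (hI : ∀ x ∈ I, x ∈ Ideal.jacobson (⊥ : Ideal R))
    (hSyl : ∀ P : Sylow p Rˣ, IsCyclic P) :
    ∀ Q : Sylow p (I.ringCon.Quotient)ˣ, IsCyclic Q :=
  sylow_cyclic_of_quotient_by_le_jacobson_general p I hI hSyl
end

section
/- Let R be a finite unitary ring of odd cardinality. Then R = R₀[R*], i.e., R is generated as a ring by its prime subring together with its group of units. -/
/-!
In a finite ring every `x` has an idempotent power `e = x ^ n` with `n ≠ 0`, and `x + 1 - e` is a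
unit: modulo any maximal ideal of the commutative ring `ℤ[x]`, either `e ≡ 0`, forcing `x ≡ 0` and
`x + 1 - e ≡ 1`, or `e ≡ 1` and `x + 1 - e ≡ x`, which divides `e`. An idempotent `e` equals
`2⁻¹ * (1 + (2e - 1))` with `(2e - 1)² = 1`, and `2` is invertible when `|R|` is odd. Hence
`x = (x + 1 - e) - 1 + e` lies in the subring generated by the units.
-/

open scoped IsMulCommutative

theorem pow_add_mul_eq_of_pow_add_eq {M : Type*} [Monoid M] {x : M} {a p : ℕ}
    (h : x ^ (a + p) = x ^ a) (j : ℕ) : x ^ (a + p * j) = x ^ a := by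
  induction j with
  | zero => simp
  | succ j ih => rw [mul_add_one, ← add_assoc, pow_add, ih, ← pow_add, h]

theorem exists_isIdempotentElem_pow {M : Type*} [Monoid M] [Finite M] (x : M) :
    ∃ n ≠ 0, IsIdempotentElem (x ^ n) := by
  obtain ⟨a, b, hab, heq⟩ := Finite.exists_ne_map_eq_of_infinite (x ^ · : ℕ → M)
  wlog hlt : a < b generalizing a b
  · exact this b a hab.symm heq.symm (by omega)
  obtain ⟨p, rfl⟩ := Nat.exists_eq_add_of_lt hlt
  have hper := pow_add_mul_eq_of_pow_add_eq (x := x) (a := a) (p := p + 1) heq.symm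
  -- `x ^ k` has period `p + 1` for `k ≥ a`, so any multiple of `p + 1` that is `≥ a` works
  refine ⟨(p + 1) * (a + 1), by positivity, ?_⟩
  obtain ⟨k, hk⟩ : ∃ k, (p + 1) * (a + 1) = a + k := ⟨_, (Nat.add_sub_of_le (by nlinarith)).symm⟩
  rw [IsIdempotentElem, ← pow_add]
  nth_rw 1 [hk]
  rw [add_right_comm, pow_add, hper, ← pow_add, hk]

theorem isUnit_add_one_sub_pow_of_commRing {R : Type*} [CommRing R] {x : R} {n : ℕ} (hn : n ≠ 0)
    (he : IsIdempotentElem (x ^ n)) : IsUnit (x + 1 - x ^ n) := by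
  by_contra hu
  obtain ⟨M, hM, huM⟩ := exists_max_ideal_of_mem_nonunits hu
  have hprod : x ^ n * (1 - x ^ n) ∈ M := by rw [he.mul_one_sub_self]; exact M.zero_mem
  apply hM.ne_top
  rw [M.eq_top_iff_one]
  rcases hM.isPrime.mem_or_mem hprod with h | h
  · have hx : x ∈ M := hM.isPrime.mem_of_pow_mem n h
    convert M.add_mem (M.sub_mem huM hx) h using 1
    ring
  · have hx : x ∈ M := by simpa using M.sub_mem huM h
    simpa using M.add_mem (M.pow_mem_of_mem hx n (Nat.pos_of_ne_zero hn)) h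

theorem isUnit_add_one_sub_pow {R : Type*} [Ring R] {x : R} {n : ℕ} (hn : n ≠ 0)
    (he : IsIdempotentElem (x ^ n)) : IsUnit (x + 1 - x ^ n) := by
  let y : Algebra.adjoin ℤ {x} := ⟨x, Algebra.self_mem_adjoin_singleton ℤ x⟩
  have hy : IsUnit (y + 1 - y ^ n) :=
    isUnit_add_one_sub_pow_of_commRing hn (Subtype.ext he)
  simpa using hy.map (Algebra.adjoin ℤ {x}).val

theorem IsIdempotentElem.isUnit_two_mul_sub_one {R : Type*} [Ring R] {e : R}
    (he : IsIdempotentElem e) : IsUnit (2 * e - 1) :=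
  have h : (2 * e - 1) * (2 * e - 1) = 1 := by noncomm_ring; rw [he.eq]; abel
  ⟨⟨_, _, h, h⟩, rfl⟩

theorem IsIdempotentElem.mem_closure_units {R : Type*} [Ring R] (h2 : IsUnit (2 : R)) {e : R}
    (he : IsIdempotentElem e) : e ∈ Subring.closure {x : R | IsUnit x} := by
  have hsum : e = ↑h2.unit⁻¹ * (1 + (2 * e - 1)) := by
    rw [add_sub_cancel, ← mul_assoc, IsUnit.val_inv_mul, one_mul]
  rw [hsum]
  exact mul_mem (Subring.subset_closure (Units.isUnit _))
    (add_mem (one_mem _) (Subring.subset_closure he.isUnit_two_mul_sub_one))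

theorem mem_closure_units_of_isIdempotentElem_pow {R : Type*} [Ring R] (h2 : IsUnit (2 : R))
    {x : R} {n : ℕ} (hn : n ≠ 0) (he : IsIdempotentElem (x ^ n)) :
    x ∈ Subring.closure {x : R | IsUnit x} := by
  have hx : x = (x + 1 - x ^ n) - 1 + x ^ n := by abel
  rw [hx]
  exact add_mem (sub_mem (Subring.subset_closure (isUnit_add_one_sub_pow hn he)) (one_mem _))
    (he.mem_closure_units h2)

theorem isUnit_two_of_odd_card {R : Type*} [Ring R] [Fintype R] (hodd : Odd (Fintype.card R)) :
    IsUnit (2 : R) := by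
  obtain ⟨m, hm⟩ := hodd
  refine IsUnit.of_mul_eq_one ((m + 1 : ℕ) : R) ?_
  calc (2 : R) * ((m + 1 : ℕ) : R) = ((Fintype.card R + 1 : ℕ) : R) := by
        rw [show Fintype.card R + 1 = 2 * (m + 1) by omega, Nat.cast_mul, Nat.cast_ofNat]
    _ = 1 := by rw [Nat.cast_add, Nat.cast_card_eq_zero, Nat.cast_one, zero_add]

theorem eq_closure_units_of_odd_card_general {R : Type*} [Ring R] [Fintype R]
    (hodd : Odd (Fintype.card R)) :
    Subring.closure {x : R | IsUnit x} = ⊤ := by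
  refine eq_top_iff.mpr fun x _ => ?_
  obtain ⟨n, hn, he⟩ := exists_isIdempotentElem_pow x
  exact mem_closure_units_of_isIdempotentElem_pow (isUnit_two_of_odd_card hodd) hn he

/-- A finite unitary ring of odd cardinality is generated (as a ring, together with its prime
subring) by its units: `R = R₀[R*]`. -/
theorem eq_closure_units_of_odd_card {R : Type*} [Ring R] [Fintype R] [Nontrivial R]
    (hodd : Odd (Fintype.card R)) :
    Subring.closure {x : R | IsUnit x} = ⊤ :=
  eq_closure_units_of_odd_card_general hodd
end

section
/- Every unitary non-commutative ring of order 8 is isomorphic to T₂(GF(2)), the ring of 2×2 upper triangular matrices over the field with two elements. -/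
/-!
For `w` outside the centre `Z`, the chain `Z < C(w) < R` of additive subgroups gives
`4 |Z| ≤ |R| = 8`, so `Z = {0, 1}` and `1 + 1 = 0`. Likewise `|C(r)| ≤ 4` forces
`C(r) = {0, 1, r, r + 1}` for noncentral `r`, so `r²` is one of `0, 1, r, r + 1`. The case
`r² = r + 1` is impossible: `r` would be a unit of order 3 acting freely on `R ∖ {0}`, and
`3 ∤ 7`. If all idempotents were central, every square would then lie in `{0, 1}`, which forces
commutativity. Hence there is a noncentral idempotent `e`; for `y` not commuting with `e`, one of
`e y (1 - e)`, `(1 - e) y e` is nonzero, and after possibly replacing `e` by `1 - e` this gives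
`n ≠ 0` with `e n = n`, `n e = 0`. Then `E₁₁ ↦ e`, `E₁₂ ↦ n` defines an embedding
`T₂(GF(2)) → R`, bijective by counting.
-/

/-- The ring `T₂(GF(2))` of `2 × 2` upper triangular matrices over `GF(2)`,
as a subring of the full matrix ring. -/
def T2GF2 : Subring (Matrix (Fin 2) (Fin 2) (ZMod 2)) where
  carrier := {M | M 1 0 = 0}
  zero_mem' := by simp
  one_mem' := by simp [Matrix.one_apply]
  add_mem' := by
    intro a b ha hb
    simp_all [Set.mem_setOf_eq, Matrix.add_apply]
  neg_mem' := by
    intro a ha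
    simp_all [Set.mem_setOf_eq, Matrix.neg_apply]
  mul_mem' := by
    intro a b ha hb
    simp_all [Set.mem_setOf_eq, Matrix.mul_apply, Fin.sum_univ_two]

theorem AddSubgroup.two_mul_card_le_of_lt {G : Type*} [AddGroup G] [Finite G]
    {H K : AddSubgroup G} (h : H < K) : 2 * Nat.card H ≤ Nat.card K := by
  obtain ⟨m, hm⟩ := AddSubgroup.card_dvd_of_le h.le
  have hm1 : m ≠ 1 := by
    rintro rfl
    exact h.ne (AddSubgroup.eq_of_le_of_card_ge h.le (by rw [hm, mul_one]))
  have hm0 : m ≠ 0 := by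
    rintro rfl
    exact Nat.card_pos.ne' (hm.trans (mul_zero _))
  rw [hm, mul_comm]
  exact Nat.mul_le_mul_left _ (by omega : 2 ≤ m)

namespace Subring

variable {R : Type*} [Ring R] [Finite R] {w : R}

theorem two_mul_card_centralizer_le (hw : w ∉ center R) :
    2 * Nat.card (centralizer {w}) ≤ Nat.card R := by
  have hlt : (centralizer {w}).toAddSubgroup < ⊤ := by
    refine lt_top_iff_ne_top.2 fun h => hw (mem_center_iff.2 fun g => ?_)
    have hg : g ∈ (centralizer {w}).toAddSubgroup := h ▸ AddSubgroup.mem_top g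
    exact (mem_centralizer_iff.1 hg w rfl).symm
  have := AddSubgroup.two_mul_card_le_of_lt hlt
  rwa [AddSubgroup.card_top] at this

theorem four_mul_card_center_le (hw : w ∉ center R) : 4 * Nat.card (center R) ≤ Nat.card R := by
  have hwC : w ∈ (centralizer {w}).toAddSubgroup := mem_centralizer_iff.2 (by simp)
  have hlt : (center R).toAddSubgroup < (centralizer {w}).toAddSubgroup :=
    lt_of_le_of_ne' (center_le_centralizer _) fun h => hw (by rwa [h] at hwC)
  have := AddSubgroup.two_mul_card_le_of_lt hlt
  have := two_mul_card_centralizer_le hw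
  change 2 * Nat.card (center R) ≤ Nat.card (centralizer {w}) at *
  omega

end Subring

theorem CharTwo.card_modEq_one_of_mul_self_eq_add_one {R : Type*} [Ring R] [Finite R]
    [CharP R 2] {x : R} (hx : x * x = x + 1) : Nat.card R ≡ 1 [MOD 3] := by
  have : Fact (Nat.Prime 3) := ⟨Nat.prime_three⟩
  have : Nontrivial R := CharP.nontrivial_of_char_ne_one (by norm_num : 2 ≠ 1)
  have hinv : x * (x + 1) = 1 := by
    rw [mul_add, hx, mul_one, add_right_comm, CharTwo.add_self_eq_zero, zero_add]
  have hinv' : (x + 1) * x = 1 := by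
    rw [add_mul, hx, one_mul, add_right_comm, CharTwo.add_self_eq_zero, zero_add]
  let u : Rˣ := ⟨x, x + 1, hinv, hinv'⟩
  have hu3 : u ^ 3 = 1 := by
    ext
    simp only [Units.val_pow_eq_pow_val, Units.val_one, u]
    rw [pow_succ, pow_two, hx, hinv']
  have hu1 : u ≠ 1 := by
    intro h
    have : x = 1 := congrArg Units.val h
    rw [this, mul_one, CharTwo.add_self_eq_zero] at hx
    exact one_ne_zero hx
  have hG : IsPGroup 3 (Subgroup.zpowers u) :=
    IsPGroup.of_card (n := 1) (by rw [Nat.card_zpowers, orderOf_eq_prime hu3 hu1, pow_one])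
  have hfix : MulAction.fixedPoints (Subgroup.zpowers u) R = {0} := by
    ext r
    simp only [MulAction.mem_fixedPoints, Set.mem_singleton_iff]
    constructor
    · intro hr
      have hxr : x * r = r := hr ⟨u, Subgroup.mem_zpowers u⟩
      calc r = (x * (x + 1)) * r := by rw [hinv, one_mul]
        _ = 0 := by rw [mul_assoc, add_mul, hxr, one_mul, CharTwo.add_self_eq_zero, mul_zero]
    · rintro rfl g
      exact smul_zero g
  have := hG.card_modEq_card_fixedPoints R
  rwa [hfix, Nat.card_coe_set_eq, Set.ncard_singleton] at this

theorem CharTwo.commute_of_mul_self_eq_zero {R : Type*} [Ring R] [CharP R 2]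
    (h : ∀ r : R, r * r = 0 ∨ r * r = 1) {a b : R} (ha : a * a = 0) (hb : b * b = 0) :
    Commute a b := by
  have : Nontrivial R := CharP.nontrivial_of_char_ne_one (by norm_num : 2 ≠ 1)
  have hsq : (a + b) * (a + b) = a * b + b * a := by
    rw [add_mul, mul_add, mul_add, ha, hb, zero_add, add_zero]
  rcases h (a + b) with h0 | h1
  · exact CharTwo.add_eq_zero.1 (hsq ▸ h0)
  exfalso
  have hba : b * a = 1 + a * b :=
    CharTwo.add_eq_iff_eq_add.1 (by rw [← h1, hsq, add_comm (b * a)])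
  have hidem : a * b * (a * b) = a * b :=
    calc a * b * (a * b) = a * (b * a) * b := by simp only [mul_assoc]
      _ = a * b + (a * a) * (b * b) := by rw [hba]; noncomm_ring
      _ = a * b := by rw [ha, zero_mul, add_zero]
  rcases hidem ▸ h (a * b) with hab | hab
  · have hba' : b * a = 1 := by rw [hba, hab, add_zero]
    have : a = 0 := by
      calc a = a * (b * a) := by rw [hba', mul_one]
        _ = 0 := by rw [← mul_assoc, hab, zero_mul]
    simp [this] at hba'
  · have : a = 0 := by
      calc a = a * (a * b) := by rw [hab, mul_one]
        _ = 0 := by rw [← mul_assoc, ha, zero_mul]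
    simp [this] at hab

theorem CharTwo.commute_of_forall_mul_self_eq_zero_or_one {R : Type*} [Ring R] [CharP R 2]
    (h : ∀ r : R, r * r = 0 ∨ r * r = 1) (x y : R) : Commute x y := by
  have hnil : ∀ r : R, ∃ s, s * s = 0 ∧ (r = s ∨ r = s + 1) := by
    intro r
    rcases h r with hr | hr
    · exact ⟨r, hr, .inl rfl⟩
    · refine ⟨r + 1, ?_, .inr (CharTwo.add_cancel_right r 1).symm⟩
      calc (r + 1) * (r + 1) = r * r + (r + r) + 1 := by noncomm_ring
        _ = 0 := by rw [hr, CharTwo.add_self_eq_zero, add_zero, CharTwo.add_self_eq_zero]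
  obtain ⟨a, ha, rfl | rfl⟩ := hnil x <;> obtain ⟨b, hb, rfl | rfl⟩ := hnil y <;>
    have hab := CharTwo.commute_of_mul_self_eq_zero h ha hb
  · exact hab
  · exact hab.add_right (Commute.one_right _)
  · exact hab.add_left (Commute.one_left _)
  · exact (hab.add_right (Commute.one_right _)).add_left (Commute.one_left _)

section CardEight

variable {R : Type*} [Ring R] [Finite R]

theorem coe_center_eq_of_card_eq_eight (hcard : Nat.card R = 8) (hR : Subring.center R ≠ ⊤) :
    (Subring.center R : Set R) = {0, 1} := by
  obtain ⟨w, -, hw⟩ := SetLike.exists_of_lt (lt_top_iff_ne_top.2 hR)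
  have : Nontrivial R := Finite.one_lt_card_iff_nontrivial.1 (by omega)
  have hZ := Subring.four_mul_card_center_le hw
  refine (Set.eq_of_subset_of_ncard_le ?_ ?_).symm
  · rintro _ (rfl | rfl)
    exacts [zero_mem _, one_mem _]
  · rw [Set.ncard_pair zero_ne_one, ← Nat.card_coe_set_eq]
    change Nat.card (Subring.center R) ≤ 2
    omega

theorem charP_two_of_card_eq_eight (hcard : Nat.card R = 8) (hR : Subring.center R ≠ ⊤) :
    CharP R 2 := by
  have : Nontrivial R := Finite.one_lt_card_iff_nontrivial.1 (by omega)
  have h2 : (1 + 1 : R) ∈ (Subring.center R : Set R) := add_mem (one_mem _) (one_mem _)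
  rw [coe_center_eq_of_card_eq_eight hcard hR] at h2
  refine CharTwo.of_one_ne_zero_of_two_eq_zero one_ne_zero ?_
  rcases h2 with h | h
  · rwa [one_add_one_eq_two] at h
  · exact absurd (add_eq_left.1 h) one_ne_zero

theorem mul_self_cases_of_card_eq_eight (hcard : Nat.card R = 8) (hR : Subring.center R ≠ ⊤)
    (r : R) : r * r = 0 ∨ r * r = 1 ∨ r * r = r ∨ r * r = r + 1 := by
  have hZ := coe_center_eq_of_card_eq_eight hcard hR
  by_cases hr : r ∈ (Subring.center R : Set R)
  · rw [hZ] at hr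
    rcases hr with rfl | rfl <;> simp
  have : CharP R 2 := charP_two_of_card_eq_eight hcard hR
  have : Nontrivial R := CharP.nontrivial_of_char_ne_one (by norm_num : 2 ≠ 1)
  have hr0 : r ≠ 0 := fun h => hr (by simp [hZ, h])
  have hr1 : r ≠ 1 := fun h => hr (by simp [hZ, h])
  set C := Subring.centralizer ({r} : Set R)
  have hrC : r ∈ C := Subring.mem_centralizer_iff.2 (by simp)
  have hsub : ({0, 1, r, r + 1} : Set R) ⊆ C := by
    rintro _ (rfl | rfl | rfl | rfl)
    exacts [zero_mem _, one_mem _, hrC, add_mem hrC (one_mem _)]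
  have hC : 2 * Nat.card C ≤ Nat.card R := Subring.two_mul_card_centralizer_le hr
  have h4 : ({0, 1, r, r + 1} : Set R).ncard = 4 := by
    refine Set.ncard_eq_four.2
      ⟨0, 1, r, r + 1, zero_ne_one, hr0.symm, ?_, hr1.symm, ?_, ?_, rfl⟩
    · exact fun h => hr1 (CharTwo.add_eq_zero.1 h.symm)
    · exact fun h => hr0 (by simpa using h.symm)
    · exact fun h => (one_ne_zero : (1 : R) ≠ 0) (by simpa using h.symm)
  have heq := Set.eq_of_subset_of_ncard_le hsub (by
    rw [h4, ← Nat.card_coe_set_eq]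
    change Nat.card C ≤ 4
    omega)
  have hrr : r * r ∈ (C : Set R) := mul_mem hrC hrC
  rw [← heq] at hrr
  simpa only [Set.mem_insert_iff, Set.mem_singleton_iff] using hrr

theorem exists_isIdempotentElem_notMem_center (hcard : Nat.card R = 8)
    (hR : Subring.center R ≠ ⊤) : ∃ e : R, IsIdempotentElem e ∧ e ∉ Subring.center R := by
  have : CharP R 2 := charP_two_of_card_eq_eight hcard hR
  by_contra! hcentral
  have hsq : ∀ r : R, r * r = 0 ∨ r * r = 1 := by
    intro r
    rcases mul_self_cases_of_card_eq_eight hcard hR r with h | h | h | h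
    · exact .inl h
    · exact .inr h
    · have hr : r ∈ (Subring.center R : Set R) := hcentral r h
      rw [coe_center_eq_of_card_eq_eight hcard hR] at hr
      rcases hr with rfl | rfl <;> simp
    · have := CharTwo.card_modEq_one_of_mul_self_eq_add_one h
      rw [hcard] at this
      exact absurd this (by decide)
  exact hR (eq_top_iff.2 fun z _ => Subring.mem_center_iff.2 fun g =>
    CharTwo.commute_of_forall_mul_self_eq_zero_or_one hsq g z)

end CardEight

theorem IsIdempotentElem.exists_nonzero_corner_of_notMem_center {R : Type*} [Ring R] {e : R}
    (he : IsIdempotentElem e) (heZ : e ∉ Subring.center R) :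
    ∃ e' n : R, IsIdempotentElem e' ∧ e' * n = n ∧ n * e' = 0 ∧ n ≠ 0 := by
  obtain ⟨y, hy⟩ : ∃ y, y * e ≠ e * y := by
    simpa [Subring.mem_center_iff] using heZ
  have hcomm : y * e - e * y = (1 - e) * y * e - e * y * (1 - e) := by noncomm_ring
  by_cases hn : e * y * (1 - e) = 0
  · refine ⟨1 - e, (1 - e) * y * e, he.one_sub, ?_, ?_, fun h => hy (sub_eq_zero.1 ?_)⟩
    · rw [← mul_assoc, ← mul_assoc, he.one_sub.eq]
    · rw [mul_assoc, he.mul_one_sub_self, mul_zero]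
    · rw [hcomm, h, hn, sub_zero]
  · refine ⟨e, e * y * (1 - e), he, ?_, ?_, hn⟩
    · rw [← mul_assoc, ← mul_assoc, he.eq]
    · rw [mul_assoc, he.one_sub_mul_self, mul_zero]

namespace T2GF2

instance : DecidablePred (· ∈ T2GF2) := fun M => decidable_of_iff (M 1 0 = 0) Iff.rfl

theorem card : Nat.card T2GF2 = 8 := by
  rw [Nat.card_eq_fintype_card]; decide

variable {R : Type*} [Ring R] [Algebra (ZMod 2) R] {e n : R}

def lift (he : IsIdempotentElem e) (hen : e * n = n) (hne : n * e = 0) : T2GF2 →+* R where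
  toFun M := M.1 0 0 • e + M.1 0 1 • n + M.1 1 1 • (1 - e)
  map_one' := by simp
  map_zero' := by simp
  map_add' M N := by
    simp only [Subring.coe_add, Matrix.add_apply, add_smul]
    abel
  map_mul' M N := by
    have hM : M.1 1 0 = 0 := M.2
    have hN : N.1 1 0 = 0 := N.2
    have hnn : n * n = 0 := by
      calc n * n = n * e * n := by rw [mul_assoc, hen]
        _ = 0 := by rw [hne, zero_mul]
    have hfn : (1 - e) * n = 0 := by rw [sub_mul, one_mul, hen, sub_self]
    have hnf : n * (1 - e) = n := by rw [mul_sub, mul_one, hne, sub_zero]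
    simp only [Subring.coe_mul, Matrix.mul_apply, Fin.sum_univ_two, hM, hN, add_mul, mul_add,
      smul_mul_smul_comm, he.eq, he.one_sub.eq, he.mul_one_sub_self, he.one_sub_mul_self, hen, hne,
      hnn, hfn, hnf, smul_zero, zero_mul, mul_zero, add_zero, zero_add]
    module

theorem lift_apply (he : IsIdempotentElem e) (hen : e * n = n) (hne : n * e = 0) (M : T2GF2) :
    lift he hen hne M = M.1 0 0 • e + M.1 0 1 • n + M.1 1 1 • (1 - e) := rfl

theorem lift_injective (he : IsIdempotentElem e) (hen : e * n = n) (hne : n * e = 0)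
    (hn : n ≠ 0) : Function.Injective (lift he hen hne) := by
  refine (injective_iff_map_eq_zero _).2 fun M hM => ?_
  rw [lift_apply] at hM
  have hfe := he.one_sub_mul_self
  have hef := he.mul_one_sub_self
  have hff := he.one_sub.eq
  have hfn : (1 - e) * n = 0 := by rw [sub_mul, one_mul, hen, sub_self]
  have hnf : n * (1 - e) = n := by rw [mul_sub, mul_one, hne, sub_zero]
  have he0 : e ≠ 0 := fun h => hn (by rw [← hen, h, zero_mul])
  have hf0 : 1 - e ≠ 0 := fun h => hn (by rw [← hnf, h, mul_zero])
  have h00 : M.1 0 0 • e = 0 := by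
    simpa [mul_add, add_mul, mul_assoc, he.eq, hen, hne, hef, hfe]
      using congrArg (e * · * e) hM
  have h01 : M.1 0 1 • n = 0 := by
    simpa [mul_add, add_mul, mul_assoc, he.eq, hen, hne, hef, hfe, hff, hnf]
      using congrArg (e * · * (1 - e)) hM
  have h11 : M.1 1 1 • (1 - e) = 0 := by
    simpa [mul_add, add_mul, mul_assoc, he.eq, hen, hne, hef, hfe, hff, hfn]
      using congrArg ((1 - e) * · * (1 - e)) hM
  ext i j
  fin_cases i <;> fin_cases j
  · exact (smul_eq_zero.1 h00).resolve_right he0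
  · exact (smul_eq_zero.1 h01).resolve_right hn
  · exact M.2
  · exact (smul_eq_zero.1 h11).resolve_right hf0

end T2GF2

/-- Every unitary non-commutative ring of order `8` is isomorphic to `T₂(GF(2))`,
the ring of `2 × 2` upper triangular matrices over the field with two elements. -/
theorem noncomm_ring_card_eight_iso_triangular {R : Type*} [Ring R] [Fintype R]
    (hcard : Fintype.card R = 8) (hnc : ¬ ∀ x y : R, x * y = y * x) :
    Nonempty (R ≃+* T2GF2) := by
  have hcard' : Nat.card R = 8 := by rwa [Nat.card_eq_fintype_card]
  have hR : Subring.center R ≠ ⊤ := fun h =>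
    hnc fun x y => Subring.mem_center_iff.1 (h ▸ Subring.mem_top y) x
  have := charP_two_of_card_eq_eight hcard' hR
  let := ZMod.algebra R 2
  obtain ⟨e₀, he₀, he₀Z⟩ := exists_isIdempotentElem_notMem_center hcard' hR
  obtain ⟨e, n, he, hen, hne, hn⟩ := he₀.exists_nonzero_corner_of_notMem_center he₀Z
  have hbij := (T2GF2.lift_injective he hen hne hn).bijective_of_nat_card_le
    (by rw [hcard', T2GF2.card])
  exact ⟨(RingEquiv.ofBijective _ hbij).symm⟩
end
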